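/- arXiv:2602.20797 — 3 statements merged into one kernel-verified Lean document; each statement's English description precedes it below -/
import Mathlib

section
/- Let δ₁,…,δ₅ be complex numbers, closed under complex conjugation, with s₁ = 0, s₅ = 0, s₂ > 0, s₃ ≥ 0 and 2s₄ − s₂² ≥ 0. Then the 5×5 real matrix B with rows (0,0,0,0,1), (√((2s₄−s₂²)/(4s₂)), 0, 0, 1, 0), (√(s₃/3), 0, 0, 0, 0), (0, s₂/2, 0, 0, 0), (0, 0, √(s₃/3), √((2s₄−s₂²)/(4s₂)), 0) is entrywise nonnegative, persymmetric, and its characteristic polynomial over ℂ equals ∏ᵢ₌₁⁵(X−δᵢ). -/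
open Matrix Polynomial
open scoped ComplexOrder

theorem my_det_fin_four {R : Type*} [CommRing R] (M : Matrix (Fin 4) (Fin 4) R) :
    M.det =
      M 0 0 * (M 1 1 * (M 2 2 * M 3 3 - M 2 3 * M 3 2) - M 1 2 * (M 2 1 * M 3 3 - M 2 3 * M 3 1) + M 1 3 * (M 2 1 * M 3 2 - M 2 2 * M 3 1))
    - M 0 1 * (M 1 0 * (M 2 2 * M 3 3 - M 2 3 * M 3 2) - M 1 2 * (M 2 0 * M 3 3 - M 2 3 * M 3 0) + M 1 3 * (M 2 0 * M 3 2 - M 2 2 * M 3 0))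
    + M 0 2 * (M 1 0 * (M 2 1 * M 3 3 - M 2 3 * M 3 1) - M 1 1 * (M 2 0 * M 3 3 - M 2 3 * M 3 0) + M 1 3 * (M 2 0 * M 3 1 - M 2 1 * M 3 0))
    - M 0 3 * (M 1 0 * (M 2 1 * M 3 2 - M 2 2 * M 3 1) - M 1 1 * (M 2 0 * M 3 2 - M 2 2 * M 3 0) + M 1 2 * (M 2 0 * M 3 1 - M 2 1 * M 3 0)) := by
  rw [Matrix.det_succ_row_zero, Fin.sum_univ_four]
  simp [Matrix.det_fin_three, Matrix.submatrix_apply, Fin.succAbove,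
    show (Fin.succ 2 : Fin 4) = 3 from rfl, show (Fin.castSucc 2 : Fin 4) = 2 from rfl,
    show ((2:Fin 4) < 2) = False from by decide, show ((2:Fin 4) < 3) = True from by decide,
    show ((3:Fin 4):ℕ) = 3 from rfl]
  ring

theorem my_det_fin_five {R : Type*} [CommRing R] (M : Matrix (Fin 5) (Fin 5) R) :
    M.det = 0
    + M 0 0*M 1 1*M 2 2*M 3 3*M 4 4
    - M 0 0*M 1 1*M 2 2*M 3 4*M 4 3
    - M 0 0*M 1 1*M 2 3*M 3 2*M 4 4
    + M 0 0*M 1 1*M 2 3*M 3 4*M 4 2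
    + M 0 0*M 1 1*M 2 4*M 3 2*M 4 3
    - M 0 0*M 1 1*M 2 4*M 3 3*M 4 2
    - M 0 0*M 1 2*M 2 1*M 3 3*M 4 4
    + M 0 0*M 1 2*M 2 1*M 3 4*M 4 3
    + M 0 0*M 1 2*M 2 3*M 3 1*M 4 4
    - M 0 0*M 1 2*M 2 3*M 3 4*M 4 1
    - M 0 0*M 1 2*M 2 4*M 3 1*M 4 3
    + M 0 0*M 1 2*M 2 4*M 3 3*M 4 1
    + M 0 0*M 1 3*M 2 1*M 3 2*M 4 4
    - M 0 0*M 1 3*M 2 1*M 3 4*M 4 2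
    - M 0 0*M 1 3*M 2 2*M 3 1*M 4 4
    + M 0 0*M 1 3*M 2 2*M 3 4*M 4 1
    + M 0 0*M 1 3*M 2 4*M 3 1*M 4 2
    - M 0 0*M 1 3*M 2 4*M 3 2*M 4 1
    - M 0 0*M 1 4*M 2 1*M 3 2*M 4 3
    + M 0 0*M 1 4*M 2 1*M 3 3*M 4 2
    + M 0 0*M 1 4*M 2 2*M 3 1*M 4 3
    - M 0 0*M 1 4*M 2 2*M 3 3*M 4 1
    - M 0 0*M 1 4*M 2 3*M 3 1*M 4 2
    + M 0 0*M 1 4*M 2 3*M 3 2*M 4 1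
    - M 0 1*M 1 0*M 2 2*M 3 3*M 4 4
    + M 0 1*M 1 0*M 2 2*M 3 4*M 4 3
    + M 0 1*M 1 0*M 2 3*M 3 2*M 4 4
    - M 0 1*M 1 0*M 2 3*M 3 4*M 4 2
    - M 0 1*M 1 0*M 2 4*M 3 2*M 4 3
    + M 0 1*M 1 0*M 2 4*M 3 3*M 4 2
    + M 0 1*M 1 2*M 2 0*M 3 3*M 4 4
    - M 0 1*M 1 2*M 2 0*M 3 4*M 4 3
    - M 0 1*M 1 2*M 2 3*M 3 0*M 4 4
    + M 0 1*M 1 2*M 2 3*M 3 4*M 4 0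
    + M 0 1*M 1 2*M 2 4*M 3 0*M 4 3
    - M 0 1*M 1 2*M 2 4*M 3 3*M 4 0
    - M 0 1*M 1 3*M 2 0*M 3 2*M 4 4
    + M 0 1*M 1 3*M 2 0*M 3 4*M 4 2
    + M 0 1*M 1 3*M 2 2*M 3 0*M 4 4
    - M 0 1*M 1 3*M 2 2*M 3 4*M 4 0
    - M 0 1*M 1 3*M 2 4*M 3 0*M 4 2
    + M 0 1*M 1 3*M 2 4*M 3 2*M 4 0
    + M 0 1*M 1 4*M 2 0*M 3 2*M 4 3
    - M 0 1*M 1 4*M 2 0*M 3 3*M 4 2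
    - M 0 1*M 1 4*M 2 2*M 3 0*M 4 3
    + M 0 1*M 1 4*M 2 2*M 3 3*M 4 0
    + M 0 1*M 1 4*M 2 3*M 3 0*M 4 2
    - M 0 1*M 1 4*M 2 3*M 3 2*M 4 0
    + M 0 2*M 1 0*M 2 1*M 3 3*M 4 4
    - M 0 2*M 1 0*M 2 1*M 3 4*M 4 3
    - M 0 2*M 1 0*M 2 3*M 3 1*M 4 4
    + M 0 2*M 1 0*M 2 3*M 3 4*M 4 1
    + M 0 2*M 1 0*M 2 4*M 3 1*M 4 3
    - M 0 2*M 1 0*M 2 4*M 3 3*M 4 1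
    - M 0 2*M 1 1*M 2 0*M 3 3*M 4 4
    + M 0 2*M 1 1*M 2 0*M 3 4*M 4 3
    + M 0 2*M 1 1*M 2 3*M 3 0*M 4 4
    - M 0 2*M 1 1*M 2 3*M 3 4*M 4 0
    - M 0 2*M 1 1*M 2 4*M 3 0*M 4 3
    + M 0 2*M 1 1*M 2 4*M 3 3*M 4 0
    + M 0 2*M 1 3*M 2 0*M 3 1*M 4 4
    - M 0 2*M 1 3*M 2 0*M 3 4*M 4 1
    - M 0 2*M 1 3*M 2 1*M 3 0*M 4 4
    + M 0 2*M 1 3*M 2 1*M 3 4*M 4 0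
    + M 0 2*M 1 3*M 2 4*M 3 0*M 4 1
    - M 0 2*M 1 3*M 2 4*M 3 1*M 4 0
    - M 0 2*M 1 4*M 2 0*M 3 1*M 4 3
    + M 0 2*M 1 4*M 2 0*M 3 3*M 4 1
    + M 0 2*M 1 4*M 2 1*M 3 0*M 4 3
    - M 0 2*M 1 4*M 2 1*M 3 3*M 4 0
    - M 0 2*M 1 4*M 2 3*M 3 0*M 4 1
    + M 0 2*M 1 4*M 2 3*M 3 1*M 4 0
    - M 0 3*M 1 0*M 2 1*M 3 2*M 4 4
    + M 0 3*M 1 0*M 2 1*M 3 4*M 4 2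
    + M 0 3*M 1 0*M 2 2*M 3 1*M 4 4
    - M 0 3*M 1 0*M 2 2*M 3 4*M 4 1
    - M 0 3*M 1 0*M 2 4*M 3 1*M 4 2
    + M 0 3*M 1 0*M 2 4*M 3 2*M 4 1
    + M 0 3*M 1 1*M 2 0*M 3 2*M 4 4
    - M 0 3*M 1 1*M 2 0*M 3 4*M 4 2
    - M 0 3*M 1 1*M 2 2*M 3 0*M 4 4
    + M 0 3*M 1 1*M 2 2*M 3 4*M 4 0
    + M 0 3*M 1 1*M 2 4*M 3 0*M 4 2
    - M 0 3*M 1 1*M 2 4*M 3 2*M 4 0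
    - M 0 3*M 1 2*M 2 0*M 3 1*M 4 4
    + M 0 3*M 1 2*M 2 0*M 3 4*M 4 1
    + M 0 3*M 1 2*M 2 1*M 3 0*M 4 4
    - M 0 3*M 1 2*M 2 1*M 3 4*M 4 0
    - M 0 3*M 1 2*M 2 4*M 3 0*M 4 1
    + M 0 3*M 1 2*M 2 4*M 3 1*M 4 0
    + M 0 3*M 1 4*M 2 0*M 3 1*M 4 2
    - M 0 3*M 1 4*M 2 0*M 3 2*M 4 1
    - M 0 3*M 1 4*M 2 1*M 3 0*M 4 2
    + M 0 3*M 1 4*M 2 1*M 3 2*M 4 0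
    + M 0 3*M 1 4*M 2 2*M 3 0*M 4 1
    - M 0 3*M 1 4*M 2 2*M 3 1*M 4 0
    + M 0 4*M 1 0*M 2 1*M 3 2*M 4 3
    - M 0 4*M 1 0*M 2 1*M 3 3*M 4 2
    - M 0 4*M 1 0*M 2 2*M 3 1*M 4 3
    + M 0 4*M 1 0*M 2 2*M 3 3*M 4 1
    + M 0 4*M 1 0*M 2 3*M 3 1*M 4 2
    - M 0 4*M 1 0*M 2 3*M 3 2*M 4 1
    - M 0 4*M 1 1*M 2 0*M 3 2*M 4 3
    + M 0 4*M 1 1*M 2 0*M 3 3*M 4 2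
    + M 0 4*M 1 1*M 2 2*M 3 0*M 4 3
    - M 0 4*M 1 1*M 2 2*M 3 3*M 4 0
    - M 0 4*M 1 1*M 2 3*M 3 0*M 4 2
    + M 0 4*M 1 1*M 2 3*M 3 2*M 4 0
    + M 0 4*M 1 2*M 2 0*M 3 1*M 4 3
    - M 0 4*M 1 2*M 2 0*M 3 3*M 4 1
    - M 0 4*M 1 2*M 2 1*M 3 0*M 4 3
    + M 0 4*M 1 2*M 2 1*M 3 3*M 4 0
    + M 0 4*M 1 2*M 2 3*M 3 0*M 4 1
    - M 0 4*M 1 2*M 2 3*M 3 1*M 4 0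
    - M 0 4*M 1 3*M 2 0*M 3 1*M 4 2
    + M 0 4*M 1 3*M 2 0*M 3 2*M 4 1
    + M 0 4*M 1 3*M 2 1*M 3 0*M 4 2
    - M 0 4*M 1 3*M 2 1*M 3 2*M 4 0
    - M 0 4*M 1 3*M 2 2*M 3 0*M 4 1
    + M 0 4*M 1 3*M 2 2*M 3 1*M 4 0
  := by
  rw [Matrix.det_succ_row_zero, Fin.sum_univ_five]
  simp [my_det_fin_four, Matrix.submatrix_apply, Fin.succAbove,
    show (Fin.succ 0 : Fin 5) = 1 from rfl, show (Fin.succ 1 : Fin 5) = 2 from rfl,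
    show (Fin.succ 2 : Fin 5) = 3 from rfl, show (Fin.succ 3 : Fin 5) = 4 from rfl,
    show (Fin.castSucc 0 : Fin 5) = 0 from rfl, show (Fin.castSucc 1 : Fin 5) = 1 from rfl,
    show (Fin.castSucc 2 : Fin 5) = 2 from rfl, show (Fin.castSucc 3 : Fin 5) = 3 from rfl,
    Fin.lt_def, show ((0:Fin 5):ℕ) = 0 from rfl, show ((1:Fin 5):ℕ) = 1 from rfl,
    show ((2:Fin 5):ℕ) = 2 from rfl, show ((3:Fin 5):ℕ) = 3 from rfl,
    show ((4:Fin 5):ℕ) = 4 from rfl]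
  norm_num
  ring

/-- Case 2(i) of the main theorem: explicit persymmetric realization
when s₅ = 0, s₂ > 0, s₃ ≥ 0 and 2s₄ - s₂² ≥ 0. -/
theorem stmt_2 (δ : Fin 5 → ℂ) (s : ℕ → ℂ) (hs : ∀ k, s k = ∑ i, δ i ^ k)
    (hconj : Multiset.map (starRingEnd ℂ) (↑(List.ofFn δ) : Multiset ℂ)
      = (↑(List.ofFn δ) : Multiset ℂ))
    (h1 : s 1 = 0) (h5 : s 5 = 0) (h2 : 0 < s 2) (h3 : 0 ≤ s 3)
    (h4 : 0 ≤ 2 * s 4 - (s 2) ^ 2) :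
    let B : Matrix (Fin 5) (Fin 5) ℝ :=
      !![0, 0, 0, 0, 1;
         Real.sqrt ((2 * (s 4).re - (s 2).re ^ 2) / (4 * (s 2).re)), 0, 0, 1, 0;
         Real.sqrt ((s 3).re / 3), 0, 0, 0, 0;
         0, (s 2).re / 2, 0, 0, 0;
         0, 0, Real.sqrt ((s 3).re / 3),
           Real.sqrt ((2 * (s 4).re - (s 2).re ^ 2) / (4 * (s 2).re)), 0]
    (∀ i j, 0 ≤ B i j) ∧ (∀ i j, B i j = B j.rev i.rev) ∧
      (Matrix.charpoly B).map (algebraMap ℝ ℂ) = ∏ i, (X - C (δ i)) := by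
  intro B
  -- the power sums are real
  have hre : ∀ k, ((s k).re : ℂ) = s k := by
    intro k
    rw [← Complex.conj_eq_iff_re, hs k]
    have h2' : ∑ i, ((starRingEnd ℂ) (δ i)) ^ k = ∑ i, δ i ^ k := by
      have := congrArg (fun m : Multiset ℂ => (m.map (fun z => z ^ k)).sum) hconj
      simp only [Multiset.map_coe, Multiset.map_map, Multiset.sum_coe, List.map_ofFn,
        List.sum_ofFn, Function.comp] at this
      exact this
    rw [map_sum]
    simpa [map_pow] using h2'
  -- real positivity facts
  have hp2 : 0 < (s 2).re := by
    rw [← hre 2] at h2; exact Complex.zero_lt_real.mp h2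
  have hp3 : 0 ≤ (s 3).re := by
    rw [← hre 3] at h3; exact Complex.zero_le_real.mp h3
  have hp4 : 0 ≤ 2 * (s 4).re - (s 2).re ^ 2 := by
    rw [← hre 4, ← hre 2,
      show (2 * (((s 4).re : ℝ) : ℂ) - (((s 2).re : ℝ) : ℂ) ^ 2)
        = ((2 * (s 4).re - (s 2).re ^ 2 : ℝ) : ℂ) by push_cast; ring] at h4
    exact Complex.zero_le_real.mp h4
  have hA : 0 ≤ (2 * (s 4).re - (s 2).re ^ 2) / (4 * (s 2).re) :=
    div_nonneg hp4 (by linarith)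
  have ha2 : (Real.sqrt ((2 * (s 4).re - (s 2).re ^ 2) / (4 * (s 2).re))) ^ 2
      = (2 * (s 4).re - (s 2).re ^ 2) / (4 * (s 2).re) := Real.sq_sqrt hA
  have hb2 : (Real.sqrt ((s 3).re / 3)) ^ 2 = (s 3).re / 3 :=
    Real.sq_sqrt (by linarith)
  refine ⟨?_, ?_, ?_⟩
  · intro i j
    fin_cases i <;> fin_cases j <;>
      simp [B, Matrix.vecHead, Matrix.vecTail] <;> positivity
  · intro i j
    fin_cases i <;> fin_cases j <;> rfl
  · -- characteristic polynomial
    have hcp : Matrix.charpoly B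
        = X ^ 5 - C ((s 2).re / 2) * X ^ 3
          - C ((Real.sqrt ((s 3).re / 3)) ^ 2) * X ^ 2
          - C ((Real.sqrt ((2 * (s 4).re - (s 2).re ^ 2) / (4 * (s 2).re))) ^ 2
                * ((s 2).re / 2)) * X
          + C ((Real.sqrt ((s 3).re / 3)) ^ 2 * ((s 2).re / 2)) := by
      rw [Matrix.charpoly, my_det_fin_five]
      simp [B, charmatrix_apply, Matrix.diagonal_apply, Matrix.vecHead, Matrix.vecTail,
        Function.comp]
      ring
    rw [ha2, hb2,
      show (2 * (s 4).re - (s 2).re ^ 2) / (4 * (s 2).re) * ((s 2).re / 2)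
        = (2 * (s 4).re - (s 2).re ^ 2) / 8 by field_simp; ring] at hcp
    rw [hcp]
    -- constraints on the δ's
    have hd1 : δ 0 + δ 1 + δ 2 + δ 3 + δ 4 = 0 := by
      have := (hs 1).symm.trans h1
      simpa [Fin.sum_univ_five] using this
    have hd5 : δ 0 ^ 5 + δ 1 ^ 5 + δ 2 ^ 5 + δ 3 ^ 5 + δ 4 ^ 5 = 0 := by
      have := (hs 5).symm.trans h5
      simpa [Fin.sum_univ_five] using this
    have hP2 : (((s 2).re : ℝ) : ℂ) = δ 0 ^ 2 + δ 1 ^ 2 + δ 2 ^ 2 + δ 3 ^ 2 + δ 4 ^ 2 := by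
      rw [hre 2, hs 2, Fin.sum_univ_five]
    have hP3 : (((s 3).re : ℝ) : ℂ) = δ 0 ^ 3 + δ 1 ^ 3 + δ 2 ^ 3 + δ 3 ^ 3 + δ 4 ^ 3 := by
      rw [hre 3, hs 3, Fin.sum_univ_five]
    have hP4 : (((s 4).re : ℝ) : ℂ) = δ 0 ^ 4 + δ 1 ^ 4 + δ 2 ^ 4 + δ 3 ^ 4 + δ 4 ^ 4 := by
      rw [hre 4, hs 4, Fin.sum_univ_five]
    apply Polynomial.funext
    intro x
    simp only [Polynomial.map_add, Polynomial.map_sub, Polynomial.map_mul,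
      Polynomial.map_pow, Polynomial.map_X, Polynomial.map_C, eval_add, eval_sub,
      eval_mul, eval_pow, eval_X, eval_C, eval_prod, Fin.prod_univ_five,
      Complex.coe_algebraMap]
    push_cast
    rw [hP2, hP3, hP4]
    linear_combination
      ((-1/30 : ℂ) * (δ 4)^4 + (1/30 : ℂ) * (δ 3) * (δ 4)^3 + (2/15 : ℂ) * (δ 3)^2 * (δ 4)^2 + (1/30 : ℂ) * (δ 3)^3 * (δ 4) + (-1/30 : ℂ) * (δ 3)^4 + (1/30 : ℂ) * (δ 2) * (δ 4)^3 + (-1/15 : ℂ) * (δ 2) * (δ 3) * (δ 4)^2 + (-1/15 : ℂ) * (δ 2) * (δ 3)^2 * (δ 4) + (1/30 : ℂ) * (δ 2) * (δ 3)^3 + (2/15 : ℂ) * (δ 2)^2 * (δ 4)^2 + (-1/15 : ℂ) * (δ 2)^2 * (δ 3) * (δ 4) + (2/15 : ℂ) * (δ 2)^2 * (δ 3)^2 + (1/30 : ℂ) * (δ 2)^3 * (δ 4) + (1/30 : ℂ) * (δ 2)^3 * (δ 3) + (-1/30 : ℂ) * (δ 2)^4 + (1/30 : ℂ) * (δ 1)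 * (δ 4)^3 + (-1/15 : ℂ) * (δ 1) * (δ 3) * (δ 4)^2 + (-1/15 : ℂ) * (δ 1) * (δ 3)^2 * (δ 4) + (1/30 : ℂ) * (δ 1) * (δ 3)^3 + (-1/15 : ℂ) * (δ 1) * (δ 2) * (δ 4)^2 + (1/5 : ℂ) * (δ 1) * (δ 2) * (δ 3) * (δ 4) + (-1/15 : ℂ) * (δ 1) * (δ 2) * (δ 3)^2 + (-1/15 : ℂ) * (δ 1) * (δ 2)^2 * (δ 4) + (-1/15 : ℂ) * (δ 1) * (δ 2)^2 * (δ 3) + (1/30 : ℂ) * (δ 1) * (δ 2)^3 + (2/15 : ℂ) * (δ 1)^2 * (δ 4)^2 + (-1/15 : ℂ) * (δ 1)^2 * (δ 3) * (δ 4) + (2/15 : ℂ) * (δ 1)^2 * (δ 3)^2 + (-1/15 : ℂ) * (δ 1)^2 * (δ 2) * (δ 4) + (-1/15 : ℂ) * (δ 1)^2 * (δ 2) * (δ 3) + (2/15 : ℂ) * (δ 1)^2 * (δ 2)^2 + (1/30 : ℂ) * (δ 1)^3 * (δ 4) + (1/30 : ℂ) * (δ 1)^3 * (δ 3) + (1/30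 : ℂ) * (δ 1)^3 * (δ 2) + (-1/30 : ℂ) * (δ 1)^4 + (1/30 : ℂ) * (δ 0) * (δ 4)^3 + (-1/15 : ℂ) * (δ 0) * (δ 3) * (δ 4)^2 + (-1/15 : ℂ) * (δ 0) * (δ 3)^2 * (δ 4) + (1/30 : ℂ) * (δ 0) * (δ 3)^3 + (-1/15 : ℂ) * (δ 0) * (δ 2) * (δ 4)^2 + (1/5 : ℂ) * (δ 0) * (δ 2) * (δ 3) * (δ 4) + (-1/15 : ℂ) * (δ 0) * (δ 2) * (δ 3)^2 + (-1/15 : ℂ) * (δ 0) * (δ 2)^2 * (δ 4) + (-1/15 : ℂ) * (δ 0) * (δ 2)^2 * (δ 3) + (1/30 : ℂ) * (δ 0) * (δ 2)^3 + (-1/15 : ℂ) * (δ 0) * (δ 1) * (δ 4)^2 + (1/5 : ℂ) * (δ 0) * (δ 1) * (δ 3) * (δ 4) + (-1/15 : ℂ) * (δ 0) * (δ 1) * (δ 3)^2 + (1/5 : ℂ) * (δ 0) * (δ 1) * (δ 2) * (δ 4) + (1/5 : ℂ) * (δ 0) * (δ 1) * (δ 2) * (δ 3) + (-1/15 : ℂ)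 * (δ 0) * (δ 1) * (δ 2)^2 + (-1/15 : ℂ) * (δ 0) * (δ 1)^2 * (δ 4) + (-1/15 : ℂ) * (δ 0) * (δ 1)^2 * (δ 3) + (-1/15 : ℂ) * (δ 0) * (δ 1)^2 * (δ 2) + (1/30 : ℂ) * (δ 0) * (δ 1)^3 + (2/15 : ℂ) * (δ 0)^2 * (δ 4)^2 + (-1/15 : ℂ) * (δ 0)^2 * (δ 3) * (δ 4) + (2/15 : ℂ) * (δ 0)^2 * (δ 3)^2 + (-1/15 : ℂ) * (δ 0)^2 * (δ 2) * (δ 4) + (-1/15 : ℂ) * (δ 0)^2 * (δ 2) * (δ 3) + (2/15 : ℂ) * (δ 0)^2 * (δ 2)^2 + (-1/15 : ℂ) * (δ 0)^2 * (δ 1) * (δ 4) + (-1/15 : ℂ) * (δ 0)^2 * (δ 1) * (δ 3) + (-1/15 : ℂ) * (δ 0)^2 * (δ 1) * (δ 2) + (2/15 : ℂ) * (δ 0)^2 * (δ 1)^2 + (1/30 : ℂ) * (δ 0)^3 * (δ 4) + (1/30 : ℂ) * (δ 0)^3 * (δ 3) + (1/30 : ℂ) * (δ 0)^3 * (δ 2)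 + (1/30 : ℂ) * (δ 0)^3 * (δ 1) + (-1/30 : ℂ) * (δ 0)^4 + (-1/8 : ℂ) * (x) * (δ 4)^3 + (1/8 : ℂ) * (x) * (δ 3) * (δ 4)^2 + (1/8 : ℂ) * (x) * (δ 3)^2 * (δ 4) + (-1/8 : ℂ) * (x) * (δ 3)^3 + (1/8 : ℂ) * (x) * (δ 2) * (δ 4)^2 + (-1/4 : ℂ) * (x) * (δ 2) * (δ 3) * (δ 4) + (1/8 : ℂ) * (x) * (δ 2) * (δ 3)^2 + (1/8 : ℂ) * (x) * (δ 2)^2 * (δ 4) + (1/8 : ℂ) * (x) * (δ 2)^2 * (δ 3) + (-1/8 : ℂ) * (x) * (δ 2)^3 + (1/8 : ℂ) * (x) * (δ 1) * (δ 4)^2 + (-1/4 : ℂ) * (x) * (δ 1) * (δ 3) * (δ 4) + (1/8 : ℂ) * (x) * (δ 1) * (δ 3)^2 + (-1/4 : ℂ) * (x) * (δ 1) * (δ 2) * (δ 4) + (-1/4 : ℂ) * (x) * (δ 1) * (δ 2) * (δ 3) + (1/8 : ℂ) * (x) * (δ 1) * (δ 2)^2 + (1/8 : ℂ) * (x) *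 (δ 1)^2 * (δ 4) + (1/8 : ℂ) * (x) * (δ 1)^2 * (δ 3) + (1/8 : ℂ) * (x) * (δ 1)^2 * (δ 2) + (-1/8 : ℂ) * (x) * (δ 1)^3 + (1/8 : ℂ) * (x) * (δ 0) * (δ 4)^2 + (-1/4 : ℂ) * (x) * (δ 0) * (δ 3) * (δ 4) + (1/8 : ℂ) * (x) * (δ 0) * (δ 3)^2 + (-1/4 : ℂ) * (x) * (δ 0) * (δ 2) * (δ 4) + (-1/4 : ℂ) * (x) * (δ 0) * (δ 2) * (δ 3) + (1/8 : ℂ) * (x) * (δ 0) * (δ 2)^2 + (-1/4 : ℂ) * (x) * (δ 0) * (δ 1) * (δ 4) + (-1/4 : ℂ) * (x) * (δ 0) * (δ 1) * (δ 3) + (-1/4 : ℂ) * (x) * (δ 0) * (δ 1) * (δ 2) + (1/8 : ℂ) * (x) * (δ 0) * (δ 1)^2 + (1/8 : ℂ) * (x) * (δ 0)^2 * (δ 4) + (1/8 : ℂ) * (x) * (δ 0)^2 * (δ 3) + (1/8 : ℂ) * (x) * (δ 0)^2 * (δ 2) + (1/8 : ℂ) * (x) * (δ 0)^2 * (δ 1)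 + (-1/8 : ℂ) * (x) * (δ 0)^3 + (-1/3 : ℂ) * (x)^2 * (δ 4)^2 + (1/3 : ℂ) * (x)^2 * (δ 3) * (δ 4) + (-1/3 : ℂ) * (x)^2 * (δ 3)^2 + (1/3 : ℂ) * (x)^2 * (δ 2) * (δ 4) + (1/3 : ℂ) * (x)^2 * (δ 2) * (δ 3) + (-1/3 : ℂ) * (x)^2 * (δ 2)^2 + (1/3 : ℂ) * (x)^2 * (δ 1) * (δ 4) + (1/3 : ℂ) * (x)^2 * (δ 1) * (δ 3) + (1/3 : ℂ) * (x)^2 * (δ 1) * (δ 2) + (-1/3 : ℂ) * (x)^2 * (δ 1)^2 + (1/3 : ℂ) * (x)^2 * (δ 0) * (δ 4) + (1/3 : ℂ) * (x)^2 * (δ 0) * (δ 3) + (1/3 : ℂ) * (x)^2 * (δ 0) * (δ 2) + (1/3 : ℂ) * (x)^2 * (δ 0) * (δ 1) + (-1/3 : ℂ) * (x)^2 * (δ 0)^2 + (-1/2 : ℂ) * (x)^3 * (δ 4) + (-1/2 : ℂ) * (x)^3 * (δ 3) + (-1/2 : ℂ) * (x)^3 * (δ 2) + (-1/2 : ℂ)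 * (x)^3 * (δ 1) + (-1/2 : ℂ) * (x)^3 * (δ 0) + (1 : ℂ) * (x)^4
      ) * hd1 + (1/5 : ℂ) * hd5
end

section
/- Let δ₁,…,δ₅ be complex numbers, closed under complex conjugation, with s₁ = 0, s₂ ≥ 0, s₃ ≥ 0, s₂² ≤ 4s₄, 2s₄ ≤ s₂² and 12s₅ − 5s₂s₃ + 5s₃√(4s₄−s₂²) ≥ 0. Set a = s₃/3, b = √((12s₅−5s₂s₃+5s₃√(4s₄−s₂²))/60), c = (s₂−√(4s₄−s₂²))/8 and d = (s₂+√(4s₄−s₂²))/4. Then the 5×5 real matrix D with rows (0,0,1,0,0), (0,0,0,1,0), (c,0,0,0,1), (b,d,0,0,0), (a,b,c,0,0) is entrywise nonnegative, persymmetric, and its characteristic polynomial over ℂ equals ∏ᵢ₌₁⁵(X−δᵢ). -/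
open Matrix Polynomial
open scoped ComplexOrder

set_option maxHeartbeats 1000000 in
lemma det_fin_four' {K : Type*} [CommRing K] (A : Matrix (Fin 4) (Fin 4) K) :
    Matrix.det A = A 0 0*A 1 1*A 2 2*A 3 3 - A 0 0*A 1 1*A 2 3*A 3 2 - A 0 0*A 1 2*A 2 1*A 3 3 + A 0 0*A 1 2*A 2 3*A 3 1 + A 0 0*A 1 3*A 2 1*A 3 2 - A 0 0*A 1 3*A 2 2*A 3 1 - A 0 1*A 1 0*A 2 2*A 3 3 + A 0 1*A 1 0*A 2 3*A 3 2 + A 0 1*A 1 2*A 2 0*A 3 3 - A 0 1*A 1 2*A 2 3*A 3 0 - A 0 1*A 1 3*A 2 0*A 3 2 + A 0 1*A 1 3*A 2 2*A 3 0 + A 0 2*A 1 0*A 2 1*A 3 3 - A 0 2*A 1 0*A 2 3*A 3 1 - A 0 2*A 1 1*A 2 0*A 3 3 + A 0 2*A 1 1*A 2 3*A 3 0 + A 0 2*A 1 3*A 2 0*A 3 1 - A 0 2*A 1 3*A 2 1*A 3 0 - A 0 3*A 1 0*A 2 1*A 3 2 + A 0 3*A 1 0*A 2 2*A 3 1 +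 A 0 3*A 1 1*A 2 0*A 3 2 - A 0 3*A 1 1*A 2 2*A 3 0 - A 0 3*A 1 2*A 2 0*A 3 1 + A 0 3*A 1 2*A 2 1*A 3 0 := by
  simp only [det_succ_row_zero, ← Nat.not_even_iff_odd, submatrix_apply, Fin.succ_zero_eq_one,
    submatrix_submatrix, det_unique, Fin.default_eq_zero, Function.comp_apply,
    Fin.succ_one_eq_two, Fin.sum_univ_succ, Fin.val_zero, Fin.zero_succAbove, Finset.univ_unique,
    Fin.val_succ, Fin.val_eq_zero, Fin.succ_succAbove_zero, Finset.sum_singleton,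
    Fin.succ_succAbove_one, Even.add_self]
  simp only [show Fin.succ (2:Fin 3) = 3 from rfl,
    show Fin.succAbove (2:Fin 4) (2:Fin 3) = 3 from rfl,
    show Fin.succAbove (3:Fin 4) (2:Fin 3) = 2 from rfl,
    show Fin.succAbove (1:Fin 4) (2:Fin 3) = 3 from rfl]
  ring



set_option maxHeartbeats 1000000 in
lemma det_fin_four_of {K : Type*} [CommRing K] (m00 m01 m02 m03 m10 m11 m12 m13 m20 m21 m22 m23 m30 m31 m32 m33 : K) :
    Matrix.det !![m00, m01, m02, m03; m10, m11, m12, m13; m20, m21, m22, m23; m30, m31, m32, m33] = m00*m11*m22*m33 - m00*m11*m23*m32 - m00*m12*m21*m33 + m00*m12*m23*m31 + m00*m13*m21*m32 - m00*m13*m22*m31 - m01*m10*m22*m33 + m01*m10*m23*m32 + m01*m12*m20*m33 - m01*m12*m23*m30 - m01*m13*m20*m32 + m01*m13*m22*m30 + m02*m10*m21*m33 - m02*m10*m23*m31 - m02*m11*m20*m33 + m02*m11*m23*m30 + m02*m13*m20*m31 - m02*m13*m21*m30 - m03*m10*m21*m32 + m03*m10*m22*m31 + m03*m11*m20*m32 -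 m03*m11*m22*m30 - m03*m12*m20*m31 + m03*m12*m21*m30 := by
  rw [det_fin_four']
  simp [Matrix.cons_val_zero, Matrix.cons_val_one, Matrix.head_cons, Matrix.cons_val_two,
    Matrix.tail_cons, Matrix.cons_val_three, Matrix.vecHead, Matrix.vecTail]

set_option maxHeartbeats 1000000 in
lemma det5 {K : Type*} [CommRing K] (z a b c d : K) :
    Matrix.det !![z, 0, -1, 0, 0;
       0, z, 0, -1, 0;
       -c, 0, z, 0, -1;
       -b, -d, 0, z, 0;
       -a, -b, -c, 0, z]
      = z^5 - (2*c+d)*z^3 - a*z^2 + 2*c*d*z + (a*d - b^2) := by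
  have s0 : Matrix.submatrix !![z, 0, -1, 0, 0;
       0, z, 0, -1, 0;
       -c, 0, z, 0, -1;
       -b, -d, 0, z, 0;
       -a, -b, -c, 0, z] Fin.succ (Fin.succAbove 0)
      = !![z,0,-1,0; 0,z,0,-1; -d,0,z,0; -b,-c,0,z] := by
    ext i j; fin_cases i <;> fin_cases j <;> rfl
  have s1 : Matrix.submatrix !![z, 0, -1, 0, 0;
       0, z, 0, -1, 0;
       -c, 0, z, 0, -1;
       -b, -d, 0, z, 0;
       -a, -b, -c, 0, z] Fin.succ (Fin.succAbove 1)
      = !![0,0,-1,0; -c,z,0,-1; -b,0,z,0; -a,-c,0,z] := by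
    ext i j; fin_cases i <;> fin_cases j <;> rfl
  have s2 : Matrix.submatrix !![z, 0, -1, 0, 0;
       0, z, 0, -1, 0;
       -c, 0, z, 0, -1;
       -b, -d, 0, z, 0;
       -a, -b, -c, 0, z] Fin.succ (Fin.succAbove 2)
      = !![0,z,-1,0; -c,0,0,-1; -b,-d,z,0; -a,-b,0,z] := by
    ext i j; fin_cases i <;> fin_cases j <;> rfl
  have s3 : Matrix.submatrix !![z, 0, -1, 0, 0;
       0, z, 0, -1, 0;
       -c, 0, z, 0, -1;
       -b, -d, 0, z, 0;
       -a, -b, -c, 0, z] Fin.succ (Fin.succAbove 3)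
      = !![0,z,0,0; -c,0,z,-1; -b,-d,0,0; -a,-b,-c,z] := by
    ext i j; fin_cases i <;> fin_cases j <;> rfl
  have s4 : Matrix.submatrix !![z, 0, -1, 0, 0;
       0, z, 0, -1, 0;
       -c, 0, z, 0, -1;
       -b, -d, 0, z, 0;
       -a, -b, -c, 0, z] Fin.succ (Fin.succAbove 4)
      = !![0,z,0,-1; -c,0,z,0; -b,-d,0,z; -a,-b,-c,0] := by
    ext i j; fin_cases i <;> fin_cases j <;> rfl
  rw [Matrix.det_succ_row_zero, Fin.sum_univ_five, s0, s1, s2, s3, s4]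
  rw [det_fin_four_of, det_fin_four_of, det_fin_four_of, det_fin_four_of, det_fin_four_of]
  simp [Matrix.cons_val_zero, Matrix.cons_val_one, Matrix.head_cons, Matrix.cons_val_two,
    Matrix.tail_cons, Matrix.cons_val_three, Matrix.cons_val_four, Matrix.vecHead,
    Matrix.vecTail, Fin.val_zero, Fin.val_one, Fin.val_two,
    show ((3:Fin 5):ℕ) = 3 from rfl, show ((4:Fin 5):ℕ) = 4 from rfl]
  ring

set_option maxHeartbeats 1600000

/-- Case 3 of the main theorem: explicit persymmetric realization
when 2s₄ ≤ s₂² ≤ 4s₄ and 12s₅ - 5s₂s₃ + 5s₃√(4s₄-s₂²) ≥ 0. -/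
theorem stmt_4 (δ : Fin 5 → ℂ) (s : ℕ → ℂ) (hs : ∀ k, s k = ∑ i, δ i ^ k)
    (hconj : Multiset.map (starRingEnd ℂ) (↑(List.ofFn δ) : Multiset ℂ)
      = (↑(List.ofFn δ) : Multiset ℂ))
    (h1 : s 1 = 0) (h2 : 0 ≤ s 2) (h3 : 0 ≤ s 3)
    (h4 : (s 2) ^ 2 ≤ 4 * s 4) (h4' : 2 * s 4 ≤ (s 2) ^ 2)
    (h5 : 0 ≤ 12 * (s 5).re - 5 * (s 2).re * (s 3).re
      + 5 * (s 3).re * Real.sqrt (4 * (s 4).re - (s 2).re ^ 2))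
    (a b c d : ℝ)
    (ha : a = (s 3).re / 3)
    (hb : b = Real.sqrt ((12 * (s 5).re - 5 * (s 2).re * (s 3).re
      + 5 * (s 3).re * Real.sqrt (4 * (s 4).re - (s 2).re ^ 2)) / 60))
    (hc : c = ((s 2).re - Real.sqrt (4 * (s 4).re - (s 2).re ^ 2)) / 8)
    (hd : d = ((s 2).re + Real.sqrt (4 * (s 4).re - (s 2).re ^ 2)) / 4) :
    let D : Matrix (Fin 5) (Fin 5) ℝ :=
      !![0, 0, 1, 0, 0;
         0, 0, 0, 1, 0;
         c, 0, 0, 0, 1;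
         b, d, 0, 0, 0;
         a, b, c, 0, 0]
    (∀ i j, 0 ≤ D i j) ∧ (∀ i j, D i j = D j.rev i.rev) ∧
      (Matrix.charpoly D).map (algebraMap ℝ ℂ) = ∏ i, (X - C (δ i)) := by
  intro D
  have hD : D = !![0, 0, 1, 0, 0;
         0, 0, 0, 1, 0;
         c, 0, 0, 0, 1;
         b, d, 0, 0, 0;
         a, b, c, 0, 0] := rfl
  -- the power sums are real
  have hreal : ∀ k, ((s k).re : ℂ) = s k := by
    intro k
    rw [← Complex.conj_eq_iff_re]
    have h := congrArg (fun m : Multiset ℂ => (m.map (fun z => z ^ k)).sum) hconj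
    simp only [Multiset.map_coe, Multiset.sum_coe, List.map_ofFn, List.sum_ofFn,
      Function.comp] at h
    rw [hs k, map_sum]
    simp only [map_pow]
    exact h
  have him : ∀ k, (s k).im = 0 := by
    intro k
    rw [← hreal k]
    simp
  rw [Complex.le_def] at h2 h3 h4 h4'
  obtain ⟨h2re, -⟩ := h2
  obtain ⟨h3re, -⟩ := h3
  obtain ⟨h4a, -⟩ := h4
  obtain ⟨h4b, -⟩ := h4'
  simp only [Complex.zero_re] at h2re h3re
  have hsq2 : ((s 2) ^ 2).re = (s 2).re ^ 2 := by
    rw [sq, Complex.mul_re, him 2]; ring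
  have h44 : ((4 : ℂ) * s 4).re = 4 * (s 4).re := by
    simp [Complex.mul_re]
  have h24 : ((2 : ℂ) * s 4).re = 2 * (s 4).re := by
    simp [Complex.mul_re]
  have h4re : (s 2).re ^ 2 ≤ 4 * (s 4).re := by rw [hsq2, h44] at h4a; exact h4a
  have h4're : 2 * (s 4).re ≤ (s 2).re ^ 2 := by rw [hsq2, h24] at h4b; exact h4b
  set r : ℝ := Real.sqrt (4 * (s 4).re - (s 2).re ^ 2) with hrdef
  have hrad : 0 ≤ 4 * (s 4).re - (s 2).re ^ 2 := by linarith
  have hr2 : r ^ 2 = 4 * (s 4).re - (s 2).re ^ 2 := Real.sq_sqrt hrad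
  have hrnn : 0 ≤ r := Real.sqrt_nonneg _
  have hrle : r ≤ (s 2).re := by
    have h1' : 4 * (s 4).re - (s 2).re ^ 2 ≤ (s 2).re ^ 2 := by linarith
    calc r ≤ Real.sqrt ((s 2).re ^ 2) := Real.sqrt_le_sqrt h1'
      _ = (s 2).re := Real.sqrt_sq h2re
  have hb2 : b ^ 2 = (12 * (s 5).re - 5 * (s 2).re * (s 3).re + 5 * (s 3).re * r) / 60 := by
    rw [hb]; exact Real.sq_sqrt (by linarith)
  have hann : 0 ≤ a := by rw [ha]; linarith
  have hbnn : 0 ≤ b := by rw [hb]; exact Real.sqrt_nonneg _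
  have hcnn : 0 ≤ c := by rw [hc]; linarith
  have hdnn : 0 ≤ d := by rw [hd]; linarith
  refine ⟨?_, ?_, ?_⟩
  · intro i j
    fin_cases i <;> fin_cases j <;>
      simp [hD, Matrix.cons_val', Matrix.cons_val_zero, Matrix.cons_val_one, Matrix.head_cons,
        Matrix.head_fin_const, Matrix.empty_val', Matrix.cons_val_fin_one,
        Matrix.vecHead, Matrix.vecTail, hann, hbnn, hcnn, hdnn]
  · intro i j
    fin_cases i <;> fin_cases j <;> rfl
  · rw [← Matrix.charpoly_map]
    apply Polynomial.funext
    intro z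
    rw [Polynomial.eval_prod]
    simp only [Polynomial.eval_sub, Polynomial.eval_X, Polynomial.eval_C]
    rw [Matrix.charpoly, ← Polynomial.coe_evalRingHom, RingHom.map_det, RingHom.mapMatrix_apply]
    have hE : (charmatrix (D.map (algebraMap ℝ ℂ))).map (Polynomial.evalRingHom z) =
        !![z, 0, -1, 0, 0;
           0, z, 0, -1, 0;
           -(c : ℂ), 0, z, 0, -1;
           -(b : ℂ), -(d : ℂ), 0, z, 0;
           -(a : ℂ), -(b : ℂ), -(c : ℂ), 0, z] := by
      ext i j
      fin_cases i <;> fin_cases j <;>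
        simp [hD, charmatrix_apply, Matrix.map_apply, Matrix.diagonal_apply,
          Matrix.cons_val', Matrix.cons_val_zero, Matrix.cons_val_one, Matrix.head_cons,
          Matrix.head_fin_const, Matrix.empty_val', Matrix.cons_val_fin_one,
          Matrix.vecHead, Matrix.vecTail, Function.comp]
    rw [hE, det5, Fin.prod_univ_five]
    -- scalar identities over ℂ
    have Hd0 : δ 0 = -(δ 1 + δ 2 + δ 3 + δ 4) := by
      have h0 : (0 : ℂ) = δ 0 + δ 1 + δ 2 + δ 3 + δ 4 := by
        have := hs 1
        rw [h1] at this
        simpa [Fin.sum_univ_five] using this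
      linear_combination -h0
    have Ha : (a : ℂ) = ((s 3).re : ℂ) / 3 := by rw [ha]; push_cast; ring
    have Hc : (c : ℂ) = (((s 2).re : ℂ) - (r : ℂ)) / 8 := by rw [hc]; push_cast; ring
    have Hd : (d : ℂ) = (((s 2).re : ℂ) + (r : ℂ)) / 4 := by rw [hd]; push_cast; ring
    have Hb2 : (b : ℂ) ^ 2 = (12 * ((s 5).re : ℂ) - 5 * ((s 2).re : ℂ) * ((s 3).re : ℂ)
        + 5 * ((s 3).re : ℂ) * (r : ℂ)) / 60 := by
      have := congrArg (Complex.ofReal) hb2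
      push_cast at this
      exact this
    have Hr2 : (r : ℂ) ^ 2 = 4 * ((s 4).re : ℂ) - ((s 2).re : ℂ) ^ 2 := by
      have := congrArg (Complex.ofReal) hr2
      push_cast at this
      exact this
    have He2 : ((s 2).re : ℂ) = (-(δ 1 + δ 2 + δ 3 + δ 4)) ^ 2
        + δ 1 ^ 2 + δ 2 ^ 2 + δ 3 ^ 2 + δ 4 ^ 2 := by
      rw [hreal 2, hs 2, Fin.sum_univ_five, Hd0]
    have He3 : ((s 3).re : ℂ) = (-(δ 1 + δ 2 + δ 3 + δ 4)) ^ 3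
        + δ 1 ^ 3 + δ 2 ^ 3 + δ 3 ^ 3 + δ 4 ^ 3 := by
      rw [hreal 3, hs 3, Fin.sum_univ_five, Hd0]
    have He4 : ((s 4).re : ℂ) = (-(δ 1 + δ 2 + δ 3 + δ 4)) ^ 4
        + δ 1 ^ 4 + δ 2 ^ 4 + δ 3 ^ 4 + δ 4 ^ 4 := by
      rw [hreal 4, hs 4, Fin.sum_univ_five, Hd0]
    have He5 : ((s 5).re : ℂ) = (-(δ 1 + δ 2 + δ 3 + δ 4)) ^ 5
        + δ 1 ^ 5 + δ 2 ^ 5 + δ 3 ^ 5 + δ 4 ^ 5 := by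
      rw [hreal 5, hs 5, Fin.sum_univ_five, Hd0]
    linear_combination
      (δ 1 * δ 2 * δ 3 * δ 4
        - z * (δ 2 * δ 3 * δ 4 + δ 1 * δ 3 * δ 4 + δ 1 * δ 2 * δ 4 + δ 1 * δ 2 * δ 3)
        + z ^ 2 * (δ 3 * δ 4 + δ 2 * δ 4 + δ 2 * δ 3 + δ 1 * δ 4 + δ 1 * δ 3 + δ 1 * δ 2)
        - z ^ 3 * (δ 1 + δ 2 + δ 3 + δ 4) + z ^ 4) * Hd0
      + ((d : ℂ) - z ^ 2) * Ha
      + (2 * z * (d : ℂ) - 2 * z ^ 3) * Hc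
      + (((s 3).re : ℂ) / 3 + z * ((s 2).re : ℂ) / 4 - z * (r : ℂ) / 4 - z ^ 3) * Hd
      + (-1 : ℂ) * Hb2
      + (-z / 16) * Hr2
      + (((s 3).re : ℂ) / 6
          + (z / 4) * (δ 4 ^ 2 + δ 3 * δ 4 + δ 3 ^ 2 + δ 2 * δ 4 + δ 2 * δ 3 + δ 2 ^ 2
            + δ 1 * δ 4 + δ 1 * δ 3 + δ 1 * δ 2 + δ 1 ^ 2)
          + z * ((s 2).re : ℂ) / 8 - z ^ 3 / 2) * He2
      + ((δ 4 ^ 2 + δ 3 * δ 4 + δ 3 ^ 2 + δ 2 * δ 4 + δ 2 * δ 3 + δ 2 ^ 2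
            + δ 1 * δ 4 + δ 1 * δ 3 + δ 1 * δ 2 + δ 1 ^ 2) / 3 - z ^ 2 / 3) * He3
      + (-z / 4) * He4
      + (-(1 / 5) : ℂ) * He5
end

section
/- Let δ₁,…,δ₅ be complex numbers, closed under complex conjugation, with s₁ = 0, s₂ ≥ 0, s₃ ≥ 0, 16s₄ − 5s₂² ≥ 0 and 36s₅ − 25s₂s₃ ≥ 0. Then (δ₁,…,δ₅) is realizable by a 5×5 entrywise nonnegative persymmetric real matrix, i.e., there exists a nonnegative persymmetric 5×5 real matrix whose characteristic polynomial over ℂ equals ∏ᵢ₌₁⁵(X−δᵢ). -/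
open Matrix Polynomial
open scoped ComplexOrder

set_option maxHeartbeats 2000000

theorem charpoly_aux (a c e f : ℝ) :
    Matrix.charpoly !![0,1,0,0,0; a,0,1,0,0; c,a,0,1,0; e,0,a,0,1; f,e,c,a,0] =
      X^5 - C (4*a) * X^3 - C (2*c) * X^2 + C (3*a^2 - 2*e) * X + C (2*a*c - f) := by
  rw [Matrix.charpoly]
  have h : charmatrix !![(0:ℝ),1,0,0,0; a,0,1,0,0; c,a,0,1,0; e,0,a,0,1; f,e,c,a,0] =
      !![X, -1, 0, 0, 0; -C a, X, -1, 0, 0; -C c, -C a, X, -1, 0;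
         -C e, 0, -C a, X, -1; -C f, -C e, -C c, -C a, X] := by
    ext i j
    fin_cases i <;> fin_cases j <;>
      simp [charmatrix_apply_eq, charmatrix_apply_ne]
  rw [h]
  simp +decide [Matrix.det_succ_row_zero, Fin.sum_univ_succ, Fin.succAbove,
    Matrix.cons_val_succ, Matrix.cons_val_zero, _root_.map_mul, _root_.map_pow,
    _root_.map_sub, _root_.map_add, _root_.map_ofNat]
  ring


/-- Trace-zero case of the sufficient conditions: if s₁ = 0, s₂ ≥ 0,
s₃ ≥ 0, 16s₄ - 5s₂² ≥ 0 and 36s₅ - 25s₂s₃ ≥ 0 then the list of five complex numbers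
is realizable by a nonnegative persymmetric matrix. -/
theorem stmt_8 (δ : Fin 5 → ℂ) (s : ℕ → ℂ) (hs : ∀ k, s k = ∑ i, δ i ^ k)
    (hconj : Multiset.map (starRingEnd ℂ) (↑(List.ofFn δ) : Multiset ℂ)
      = (↑(List.ofFn δ) : Multiset ℂ))
    (h1 : s 1 = 0) (h2 : 0 ≤ s 2) (h3 : 0 ≤ s 3)
    (h4 : 0 ≤ 16 * s 4 - 5 * (s 2) ^ 2) (h5 : 0 ≤ 36 * s 5 - 25 * s 2 * s 3) :
    ∃ A : Matrix (Fin 5) (Fin 5) ℝ, (∀ i j, 0 ≤ A i j) ∧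
      (∀ i j, A i j = A j.rev i.rev) ∧
      (Matrix.charpoly A).map (algebraMap ℝ ℂ) = ∏ i, (X - C (δ i)) := by
  rw [Complex.nonneg_iff] at h2 h3 h4 h5
  obtain ⟨r2, hs2⟩ : ∃ r : ℝ, s 2 = r :=
    ⟨(s 2).re, Complex.ext (by simp) (by simpa using h2.2.symm)⟩
  obtain ⟨r3, hs3⟩ : ∃ r : ℝ, s 3 = r :=
    ⟨(s 3).re, Complex.ext (by simp) (by simpa using h3.2.symm)⟩
  obtain ⟨r4, hs4⟩ : ∃ r : ℝ, s 4 = r := by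
    refine ⟨(s 4).re, Complex.ext (by simp) ?_⟩
    have := h4.2
    rw [hs2] at this
    simp [← Complex.ofReal_pow] at this
    simp [← this]
  obtain ⟨r5, hs5⟩ : ∃ r : ℝ, s 5 = r := by
    refine ⟨(s 5).re, Complex.ext (by simp) ?_⟩
    have := h5.2
    rw [hs2, hs3] at this
    simp [← Complex.ofReal_mul] at this
    simp [← this]
  have hr2 : 0 ≤ r2 := by
    have := h2.1; rw [hs2] at this; simpa using this
  have hr3 : 0 ≤ r3 := by
    have := h3.1; rw [hs3] at this; simpa using this
  have hr4 : 0 ≤ 16 * r4 - 5 * r2 ^ 2 := by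
    have := h4.1
    rw [hs2, hs4] at this
    simpa [← Complex.ofReal_pow, ← Complex.ofReal_mul, ← Complex.ofReal_sub] using this
  have hr5 : 0 ≤ 36 * r5 - 25 * r2 * r3 := by
    have := h5.1
    rw [hs2, hs3, hs5] at this
    simpa [← Complex.ofReal_mul, ← Complex.ofReal_sub] using this
  have hδ1 : δ 4 = -(δ 0 + δ 1 + δ 2 + δ 3) := by
    have := (hs 1).symm.trans h1
    rw [Fin.sum_univ_five] at this
    simp only [pow_one] at this
    linear_combination this
  refine ⟨!![0,1,0,0,0; r2/8,0,1,0,0; r3/6,r2/8,0,1,0;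
      (16*r4-5*r2^2)/128,0,r2/8,0,1;
      (8*r5-5*r2*r3)/40,(16*r4-5*r2^2)/128,r3/6,r2/8,0], ?_, ?_, ?_⟩
  · intro i j
    fin_cases i <;> fin_cases j <;> simp <;>
      nlinarith [mul_nonneg hr2 hr3, hr2, hr3, hr4, hr5]
  · intro i j
    fin_cases i <;> fin_cases j <;> rfl
  · rw [charpoly_aux]
    refine Polynomial.funext fun x => ?_
    simp only [Polynomial.map_add, Polynomial.map_sub, Polynomial.map_mul,
      Polynomial.map_pow, Polynomial.map_X, Polynomial.map_C, eval_add, eval_sub,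
      eval_mul, eval_pow, eval_X, eval_C, eval_prod, Fin.prod_univ_five]
    have e2 : ((r2:ℂ)) = δ 0 ^2 + δ 1 ^2 + δ 2 ^2 + δ 3 ^2 + δ 4 ^2 := by
      rw [← hs2, hs 2, Fin.sum_univ_five]
    have e3 : ((r3:ℂ)) = δ 0 ^3 + δ 1 ^3 + δ 2 ^3 + δ 3 ^3 + δ 4 ^3 := by
      rw [← hs3, hs 3, Fin.sum_univ_five]
    have e4 : ((r4:ℂ)) = δ 0 ^4 + δ 1 ^4 + δ 2 ^4 + δ 3 ^4 + δ 4 ^4 := by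
      rw [← hs4, hs 4, Fin.sum_univ_five]
    have e5 : ((r5:ℂ)) = δ 0 ^5 + δ 1 ^5 + δ 2 ^5 + δ 3 ^5 + δ 4 ^5 := by
      rw [← hs5, hs 5, Fin.sum_univ_five]
    push_cast
    simp only [Complex.coe_algebraMap, e2, e3, e4, e5, hδ1]
    ring
end
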